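/- Let (R, m, k) be a Noetherian local ring, F a minimal free resolution of k, and suppose for some d ≥ 1 that the map υ^1_d : Tor_d^R(k, R/m^2) → Tor_d^R(k, R/m) is zero. Then every cycle of lin(F) in homological degree d lies in m*·lin(F)_d; equivalently, ker(∂*_d) ⊆ m*·F_d^g(-d). -/

import Mathlib

open CategoryTheory IsLocalRing

/-- The submodule `m^i N` of `N`. -/
abbrev mpi (R : Type u) [CommRing R] [IsLocalRing R]
    (N : Type u) [AddCommGroup N] [Module R N] (i : ℕ) : Submodule R N :=
  (maximalIdeal R ^ i) • (⊤ : Submodule R N)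

/-!
Let `P → R/m²` be a projective resolution and `φ : P → F` a lift of the projection
`R/m² → k`. As `F` is minimal, `k ⊗ F` has zero differentials, so `υ¹_d = 0` says that
`k ⊗ φ_d` kills every cycle of `k ⊗ P_d`. If `∂x ∈ m² F_{d-1}`, the usual zig-zag through
the double complex `F ⊗ P` (the `F_s` are flat, `P` is exact) carries `x ⊗ u`, with
`u ↦ 1 ∈ R/m²`, to such a cycle. Mapping the zig-zag along `1 ⊗ φ` into `F ⊗ F` and unwinding it backwards, now using the
exactness of `F`, writes `x ⊗ φ₀ u` as a horizontal plus a vertical boundary. Both die under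
`F_d ⊗ ε : F_d ⊗ F_0 → F_d ⊗ k` (the first by minimality), while `x ⊗ φ₀ u ↦ x ⊗ 1`; hence
`x ⊗ 1 = 0` in `F_d ⊗ k = F_d / m F_d`.
-/

open TensorProduct

universe u v

namespace LinearMap

variable {R : Type*} [CommRing R] {I : Ideal R} {M N : Type*} [AddCommGroup M] [Module R M]
  [AddCommGroup N] [Module R N]

lemma _root_.TensorProduct.tmul_eq_zero_of_mem_smul_top {y : N}
    (hy : y ∈ I • (⊤ : Submodule R N)) (c : R ⧸ I) : y ⊗ₜ[R] c = 0 := by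
  obtain ⟨r, rfl⟩ := Ideal.Quotient.mk_surjective c
  apply (tensorQuotEquivQuotSMul N I).injective
  simpa [← Submodule.Quotient.mk_smul, Submodule.Quotient.mk_eq_zero] using
    Submodule.smul_mem _ r hy

lemma rTensor_quotient_eq_zero {f : M →ₗ[R] N} (hf : range f ≤ I • ⊤) :
    f.rTensor (R ⧸ I) = 0 :=
  TensorProduct.ext' fun y c => by simpa using tmul_eq_zero_of_mem_smul_top (hf ⟨y, rfl⟩) c

lemma lTensor_quotient_eq_zero {f : M →ₗ[R] N} (hf : range f ≤ I • ⊤) :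
    f.lTensor (R ⧸ I) = 0 :=
  TensorProduct.ext' fun c y => (TensorProduct.comm R _ _).injective <| by
    simpa using tmul_eq_zero_of_mem_smul_top (hf ⟨y, rfl⟩) c

lemma lTensor_rTensor_comm_apply {A A' B B' : Type*} [AddCommGroup A] [Module R A]
    [AddCommGroup A'] [Module R A'] [AddCommGroup B] [Module R B] [AddCommGroup B'] [Module R B']
    (f : A →ₗ[R] A') (g : B →ₗ[R] B') (c : A ⊗[R] B) :
    g.lTensor A' (f.rTensor B c) = f.rTensor B' (g.lTensor A c) := by
  rw [← comp_apply, lTensor_comp_rTensor, ← rTensor_comp_lTensor, comp_apply]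

end LinearMap

lemma mem_smul_top_of_tmul_mem_range_sup_range {R : Type*} [CommRing R] {I : Ideal R}
    {A B C₀ C₁ : Type*} [AddCommGroup A] [Module R A] [AddCommGroup B] [Module R B]
    [AddCommGroup C₀] [Module R C₀] [AddCommGroup C₁] [Module R C₁]
    {f : A →ₗ[R] B} (hf : LinearMap.range f ≤ I • ⊤) {g : C₁ →ₗ[R] C₀} {ε : C₀ →ₗ[R] R ⧸ I}
    (hεg : ε ∘ₗ g = 0) {x : B} {u : C₀} (hu : ε u = 1)
    (hx : x ⊗ₜ u ∈ LinearMap.range (f.rTensor C₀) ⊔ LinearMap.range (g.lTensor B)) :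
    x ∈ I • (⊤ : Submodule R B) := by
  let Φ := (tensorQuotEquivQuotSMul B I).toLinearMap ∘ₗ ε.lTensor B
  have hΦ : LinearMap.range (f.rTensor C₀) ⊔ LinearMap.range (g.lTensor B) ≤ LinearMap.ker Φ := by
    refine sup_le (LinearMap.range_le_ker_iff.mpr ?_) (LinearMap.range_le_ker_iff.mpr ?_)
    · rw [LinearMap.comp_assoc, LinearMap.lTensor_comp_rTensor, ← LinearMap.rTensor_comp_lTensor,
        LinearMap.rTensor_quotient_eq_zero hf, LinearMap.zero_comp, LinearMap.comp_zero]
    · rw [LinearMap.comp_assoc, ← LinearMap.lTensor_comp, hεg, LinearMap.lTensor_zero,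
        LinearMap.comp_zero]
  have hΦx : Φ (x ⊗ₜ u) = Submodule.Quotient.mk x := by
    simp [Φ, hu, ← map_one (Ideal.Quotient.mk I), -map_one]
  rw [← Submodule.Quotient.mk_eq_zero, ← hΦx]
  exact hΦ hx

namespace CategoryTheory.ProjectiveResolution

variable {R : Type u} [CommRing R] {X : ModuleCat.{v} R} (P : ProjectiveResolution X)

lemma function_exact_succ (n : ℕ) :
    Function.Exact (P.complex.d (n + 2) (n + 1)).hom (P.complex.d (n + 1) n).hom :=
  (ShortComplex.ShortExact.moduleCat_exact_iff_function_exact _).mp (P.exact_succ n)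

lemma function_exact₀ : Function.Exact (P.complex.d 1 0).hom (P.π.f 0).hom :=
  (ShortComplex.ShortExact.moduleCat_exact_iff_function_exact _).mp P.exact₀

lemma homologyMap_lift_eq_zero {C D : Type*} [Category C] [Abelian C] [HasProjectiveResolutions C]
    [Category D] [Abelian D] (G : C ⥤ D) [G.Additive] {X Y : C} (f : X ⟶ Y)
    (P : ProjectiveResolution X) (Q : ProjectiveResolution Y) (n : ℕ)
    (hf : (G.leftDerived n).map f = 0) :
    HomologicalComplex.homologyMap ((G.mapHomologicalComplex _).map (lift f P Q)) n = 0 := by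
  have h := G.leftDerived_map_eq n f (lift f P Q) (lift_commutes f P Q)
  rwa [hf, eq_comm, Preadditive.IsIso.comp_left_eq_zero,
    Preadditive.IsIso.comp_right_eq_zero] at h

end CategoryTheory.ProjectiveResolution

namespace HomologicalComplex

variable {R : Type u} [CommRing R] {ι : Type*} {c : ComplexShape ι}
  (C : HomologicalComplex (ModuleCat.{v} R) c) (M : Type*) [AddCommGroup M] [Module R M]

lemma lTensor_d_lTensor_d (i j k : ι) (x : M ⊗[R] C.X i) :
    (C.d j k).hom.lTensor M ((C.d i j).hom.lTensor M x) = 0 := by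
  rw [← LinearMap.lTensor_comp_apply, ← ModuleCat.hom_comp, C.d_comp_d, ModuleCat.hom_zero,
    LinearMap.lTensor_zero, LinearMap.zero_apply]

lemma rTensor_d_rTensor_d (i j k : ι) (x : C.X i ⊗[R] M) :
    (C.d j k).hom.rTensor M ((C.d i j).hom.rTensor M x) = 0 := by
  rw [← LinearMap.rTensor_comp_apply, ← ModuleCat.hom_comp, C.d_comp_d, ModuleCat.hom_zero,
    LinearMap.rTensor_zero, LinearMap.zero_apply]

end HomologicalComplex

namespace ChainComplex

open LinearMap

variable {R : Type u} [CommRing R]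

lemma apply_eq_zero_of_homologyMap_eq_zero {K L : ChainComplex (ModuleCat.{u} R) ℕ} (ψ : K ⟶ L)
    (n : ℕ) (hL : L.d (n + 2) (n + 1) = 0) (hψ : HomologicalComplex.homologyMap ψ (n + 1) = 0)
    (y : K.X (n + 1)) (hy : K.d (n + 1) n y = 0) : ψ.f (n + 1) y = 0 := by
  have := L.isIso_homologyπ (n + 2) (n + 1) (by simp) hL
  have hcycles : HomologicalComplex.cyclesMap ψ (n + 1) = 0 := by
    rw [← cancel_mono (L.homologyπ (n + 1)), Limits.zero_comp,
      ← HomologicalComplex.homologyπ_naturality, hψ, Limits.comp_zero]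
  let yhom : ModuleCat.of R R ⟶ K.X (n + 1) := ModuleCat.ofHom (LinearMap.toSpanSingleton R _ y)
  have hyhom : yhom ≫ K.d (n + 1) n = 0 := by
    ext
    simp [yhom, hy]
  have h0 : yhom ≫ ψ.f (n + 1) = 0 := by
    rw [← K.liftCycles_i yhom n (by simp) hyhom, Category.assoc,
      ← HomologicalComplex.cyclesMap_i, hcycles, Limits.zero_comp, Limits.comp_zero]
  simpa [yhom] using congr($h0 (1 : R))

def tensorBoundaries (C C' : ChainComplex (ModuleCat.{v} R) ℕ) (s p : ℕ) :
    Submodule R (C.X s ⊗[R] C'.X p) :=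
  range ((C.d (s + 1) s).hom.rTensor (C'.X p)) ⊔ range ((C'.d (p + 1) p).hom.lTensor (C.X s))

variable {C D : ChainComplex (ModuleCat.{v} R) ℕ} [∀ n, Module.Flat R (C.X n)]

lemma lTensor_f_mem_tensorBoundaries_of_succ
    (hC : ∀ n, Function.Exact (C.d (n + 2) (n + 1)).hom (C.d (n + 1) n).hom) (φ : D ⟶ C)
    {s p : ℕ} {w : C.X (s + 1) ⊗[R] D.X p} {w' : C.X s ⊗[R] D.X (p + 1)}
    (hw : (D.d (p + 1) p).hom.lTensor _ w' = (C.d (s + 1) s).hom.rTensor _ w)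
    (hw' : (φ.f (p + 1)).hom.lTensor _ w' ∈ tensorBoundaries C C s (p + 1)) :
    (φ.f p).hom.lTensor _ w ∈ tensorBoundaries C C (s + 1) p := by
  obtain ⟨_, ⟨a, rfl⟩, _, ⟨b, rfl⟩, hab⟩ := Submodule.mem_sup.mp hw'
  have hφ : (C.d (p + 1) p).hom ∘ₗ (φ.f (p + 1)).hom = (φ.f p).hom ∘ₗ (D.d (p + 1) p).hom :=
    congrArg ModuleCat.Hom.hom (φ.comm (p + 1) p)
  have hcycle : (C.d (s + 1) s).hom.rTensor _
      ((φ.f p).hom.lTensor _ w - (C.d (p + 1) p).hom.lTensor _ a) = 0 := by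
    rw [map_sub, sub_eq_zero, ← lTensor_rTensor_comm_apply, ← hw, ← lTensor_comp_apply, ← hφ,
      lTensor_comp_apply, ← hab, map_add, HomologicalComplex.lTensor_d_lTensor_d, add_zero,
      lTensor_rTensor_comm_apply]
  obtain ⟨a', ha'⟩ := ((Module.Flat.rTensor_exact _ (hC s)) _).mp hcycle
  exact Submodule.mem_sup.mpr ⟨_, ⟨a', rfl⟩, _, ⟨a, rfl⟩, by rw [ha', sub_add_cancel]⟩

/-- The hypotheses make `w` a link of a zig-zag of total degree `n + 1` in `C ⊗ D`; they are
phrased with `s = t + 1` and `p = q + 1` so as to be vacuous at the edges `s = 0` and `p = 0`. -/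
lemma lTensor_f_mem_tensorBoundaries {M : Type*} [AddCommGroup M] [Module R M]
    (hC : ∀ n, Function.Exact (C.d (n + 2) (n + 1)).hom (C.d (n + 1) n).hom)
    {ε : C.X 0 →ₗ[R] M} (hε : Function.Exact (C.d 1 0).hom ε)
    (hD : ∀ n, Function.Exact (D.d (n + 2) (n + 1)).hom (D.d (n + 1) n).hom) (φ : D ⟶ C) (n : ℕ)
    (hφ : ∀ y : M ⊗[R] D.X (n + 1), (D.d (n + 1) n).hom.lTensor M y = 0 →
      (φ.f (n + 1)).hom.lTensor M y = 0) :
    ∀ s p, s + p = n + 1 → ∀ w : C.X s ⊗[R] D.X p,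
      (∀ t, s = t + 1 → (C.d s t).hom.rTensor _ w ∈ range ((D.d (p + 1) p).hom.lTensor (C.X t))) →
      (∀ q, p = q + 1 → (D.d p q).hom.lTensor _ w ∈ range ((C.d (s + 1) s).hom.rTensor (D.X q))) →
      (φ.f p).hom.lTensor _ w ∈ tensorBoundaries C C s p := by
  intro s
  induction s with
  | zero =>
    intro p hp w _ hver
    obtain rfl : p = n + 1 := by omega
    obtain ⟨c, hc⟩ := hver n rfl
    have hcycle : (D.d (n + 1) n).hom.lTensor M (ε.rTensor _ w) = 0 := by
      rw [lTensor_rTensor_comm_apply, ← hc, ← rTensor_comp_apply, hε.linearMap_comp_eq_zero,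
        rTensor_zero, LinearMap.zero_apply]
    have hw := hφ _ hcycle
    rw [lTensor_rTensor_comm_apply] at hw
    exact Submodule.mem_sup_left (((Module.Flat.rTensor_exact _ hε) _).mp hw)
  | succ s ih =>
    intro p hp w hhor _
    obtain ⟨w', hw'⟩ := hhor s rfl
    refine lTensor_f_mem_tensorBoundaries_of_succ hC φ hw' (ih (p + 1) (by omega) w' ?_ ?_)
    · rintro t rfl
      refine ((Module.Flat.lTensor_exact _ (hD p)) _).mp ?_
      rw [lTensor_rTensor_comm_apply, hw', HomologicalComplex.rTensor_d_rTensor_d]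
    · intro q hq
      obtain rfl : q = p := by omega
      exact ⟨w, hw'.symm⟩

end ChainComplex

theorem stmt19_general (R : Type u) [CommRing R] [IsLocalRing R]
    (F : ProjectiveResolution (ModuleCat.of R (R ⧸ maximalIdeal R)))
    (hmin : ∀ n, LinearMap.range (F.complex.d (n + 1) n).hom ≤ mpi R (F.complex.X n) 1)
    (j : ℕ)
    (hups : ((Tor (ModuleCat.{u} R) (j + 1)).obj
        (ModuleCat.of R (R ⧸ maximalIdeal R))).map
      (ModuleCat.ofHom (Submodule.mapQ (maximalIdeal R ^ 2) (maximalIdeal R)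
          LinearMap.id (Ideal.pow_le_self two_ne_zero)) :
        ModuleCat.of R (R ⧸ (maximalIdeal R ^ 2)) ⟶
          ModuleCat.of R (R ⧸ maximalIdeal R)) = 0) :
    ∀ (i : ℕ) (x : F.complex.X (j + 1)), x ∈ mpi R (F.complex.X (j + 1)) i →
      F.complex.d (j + 1) j x ∈ mpi R (F.complex.X j) (i + 2) →
      x ∈ mpi R (F.complex.X (j + 1)) (max i 1) := by
  rintro (_ | i) x hx hdx
  case succ => simpa using hx
  simp only [mpi, zero_add, Nat.zero_max, pow_one] at hmin hdx ⊢
  let P := projectiveResolution (ModuleCat.of R (R ⧸ maximalIdeal R ^ 2))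
  let q : ModuleCat.of R (R ⧸ maximalIdeal R ^ 2) ⟶ ModuleCat.of R (R ⧸ maximalIdeal R) :=
    ModuleCat.ofHom (Submodule.mapQ _ _ LinearMap.id (Ideal.pow_le_self two_ne_zero))
  let φ := ProjectiveResolution.lift q P F
  have hcycles : ∀ y : (R ⧸ maximalIdeal R) ⊗[R] P.complex.X (j + 1),
      (P.complex.d (j + 1) j).hom.lTensor _ y = 0 → (φ.f (j + 1)).hom.lTensor _ y = 0 :=
    ChainComplex.apply_eq_zero_of_homologyMap_eq_zero _ j
      (ModuleCat.hom_ext (LinearMap.lTensor_quotient_eq_zero (hmin (j + 1))))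
      (ProjectiveResolution.homologyMap_lift_eq_zero _ q P F (j + 1) hups)
  obtain ⟨u, hu⟩ := (ModuleCat.epi_iff_surjective (P.π.f 0)).mp inferInstance
    (Submodule.Quotient.mk 1)
  have hφu : (F.π.f 0).hom (φ.f 0 u) = (1 : R ⧸ maximalIdeal R) :=
    congr($(ProjectiveResolution.lift_commutes_zero q P F).hom u).trans (congrArg q.hom hu)
  have hdxu : (F.complex.d (j + 1) j).hom.rTensor _ (x ⊗ₜ u) ∈
      LinearMap.range ((P.complex.d 1 0).hom.lTensor (F.complex.X j)) := by
    refine ((Module.Flat.lTensor_exact _ P.function_exact₀) _).mp ?_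
    rw [LinearMap.rTensor_tmul, LinearMap.lTensor_tmul, hu]
    exact TensorProduct.tmul_eq_zero_of_mem_smul_top hdx _
  have hbdry := ChainComplex.lTensor_f_mem_tensorBoundaries F.function_exact_succ
    F.function_exact₀ P.function_exact_succ φ j hcycles (j + 1) 0 rfl (x ⊗ₜ u)
    (fun _ ht => by cases ht; exact hdxu) (fun q hq => absurd hq (Nat.zero_ne_add_one q))
  rw [LinearMap.lTensor_tmul] at hbdry
  exact mem_smul_top_of_tmul_mem_range_sup_range (hmin (j + 1))
    F.function_exact₀.linearMap_comp_eq_zero hφu hbdry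

/-- Let `(R, m, k)` be a Noetherian local ring, `F` a minimal free
resolution of `k`, and suppose for some `d = j + 1 ≥ 1` that
`υ¹_d : Tor_d(k, R/m²) → Tor_d(k, R/m)` is zero.  Then every cycle of `lin(F)` in
homological degree `d` lies in `m* · lin(F)_d = m* · F_d^g(-d)`: at the level of
pieces, if `x ∈ m^i F_d` satisfies `∂ x ∈ m^(i+2) F_(d-1)` (i.e. its class is a cycle
in `m^i F_d / m^(i+1) F_d`), then `x ∈ m^(max i 1) F_d`. -/
theorem stmt19 (R : Type u) [CommRing R] [IsNoetherianRing R] [IsLocalRing R]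
    (F : ProjectiveResolution (ModuleCat.of R (R ⧸ maximalIdeal R)))
    (hfree : ∀ n, Module.Free R (F.complex.X n))
    (hfin : ∀ n, Module.Finite R (F.complex.X n))
    (hmin : ∀ n, LinearMap.range (F.complex.d (n + 1) n).hom ≤ mpi R (F.complex.X n) 1)
    (j : ℕ)
    (hups : ((Tor (ModuleCat.{u} R) (j + 1)).obj
        (ModuleCat.of R (R ⧸ maximalIdeal R))).map
      (ModuleCat.ofHom (Submodule.mapQ (maximalIdeal R ^ 2) (maximalIdeal R)
          LinearMap.id (Ideal.pow_le_self two_ne_zero)) :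
        ModuleCat.of R (R ⧸ (maximalIdeal R ^ 2)) ⟶
          ModuleCat.of R (R ⧸ maximalIdeal R)) = 0) :
    ∀ (i : ℕ) (x : F.complex.X (j + 1)), x ∈ mpi R (F.complex.X (j + 1)) i →
      F.complex.d (j + 1) j x ∈ mpi R (F.complex.X j) (i + 2) →
      x ∈ mpi R (F.complex.X (j + 1)) (max i 1) :=
  stmt19_general R F hmin j hups
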